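/- arXiv:1909.03419 — 3 statements merged into one kernel-verified Lean document; each statement's English description precedes it below -/
import Mathlib

section
/- Assume ξ_i ≥ 0, ξ_j ≥ 0, ξ_k ≥ 0. For all positive reals r_i, r_j, r_k, the Euclidean inner angles satisfy 0 < ϑ_i < π − Θ_i, 0 < ϑ_j < π − Θ_j, 0 < ϑ_k < π − Θ_k, and ϑ_i + ϑ_j + ϑ_k = π. -/
/-- Euclidean side length of a three-circle configuration:
`eucLen I rj rk = √(rj² + rk² + 2·I·rj·rk)`. -/
noncomputable def eucLen (I rj rk : ℝ) : ℝ :=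
  Real.sqrt (rj ^ 2 + rk ^ 2 + 2 * I * rj * rk)

/-- The Euclidean inner angle `ϑ_i` at the center of the circle of radius `r_i`
in the three-circle configuration with radii `r_i, r_j, r_k` and cosines of
exterior intersection angles `I_i, I_j, I_k`.  The angles `ϑ_j, ϑ_k` are
obtained by cyclic permutation of the arguments. -/
noncomputable def eucAngle (Ii Ij Ik ri rj rk : ℝ) : ℝ :=
  Real.arccos ((eucLen Ij rk ri ^ 2 + eucLen Ik ri rj ^ 2 - eucLen Ii rj rk ^ 2) /
    (2 * eucLen Ij rk ri * eucLen Ik ri rj))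

/-! Write `A = r_i² + I_j r_k r_i + I_k r_i r_j - I_i r_j r_k`, so that `cos ϑ_i = A / (l_j l_k)`.
The difference `l_j² l_k² - A²` is a sum of six terms that are nonnegative when `-1 < I ≤ 1` and
`ξ ≥ 0`, and not all zero. Hence the three lengths form a nondegenerate triangle, which can be
drawn in `ℂ`, so its angles are positive and sum to `π`.
The bound `ϑ_i < π - Θ_i` amounts to `A + I_i l_j l_k > 0`. For `I_i ≤ 0` use `l_j ≤ r_k + r_i`,
`l_k ≤ r_i + r_j`; for `I_i > 0` use `l_j ≥ r_k + I_j r_i`, `l_k ≥ r_j + I_k r_i`. Either way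
`A + I_i l_j l_k` dominates a polynomial in the radii whose coefficients are nonnegative by the
`ξ` conditions. -/

open Real EuclideanGeometry

theorem EuclideanGeometry.angle_eq_arccos_dist {V P : Type*} [NormedAddCommGroup V]
    [InnerProductSpace ℝ V] [MetricSpace P] [NormedAddTorsor V P] {p₁ p₂ p₃ : P}
    (h₁ : p₁ ≠ p₂) (h₃ : p₃ ≠ p₂) :
    ∠ p₁ p₂ p₃ = arccos ((dist p₁ p₂ ^ 2 + dist p₃ p₂ ^ 2 - dist p₁ p₃ ^ 2) /
      (2 * dist p₁ p₂ * dist p₃ p₂)) := by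
  have h₁ := dist_pos.2 h₁
  have h₃ := dist_pos.2 h₃
  refine (arccos_eq_of_eq_cos (angle_nonneg _ _ _) (angle_le_pi _ _ _) ?_).symm
  rw [div_eq_iff (by positivity)]
  linear_combination -law_cos p₁ p₂ p₃

theorem Complex.exists_triangle_dist_eq {a b c : ℝ} (ha : 0 ≤ a) (hb : 0 < b) (hc : 0 < c)
    (hcos : |(b ^ 2 + c ^ 2 - a ^ 2) / (2 * b * c)| ≤ 1) :
    ∃ p q r : ℂ, dist q r = a ∧ dist r p = b ∧ dist p q = c := by
  set t := (b ^ 2 + c ^ 2 - a ^ 2) / (2 * b * c)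
  have ht : 2 * b * c * t = b ^ 2 + c ^ 2 - a ^ 2 := mul_div_cancel₀ _ (by positivity)
  obtain ⟨s, hs⟩ : ∃ s, s ^ 2 = 1 - t ^ 2 :=
    ⟨_, sq_sqrt (sub_nonneg.2 ((sq_le_one_iff_abs_le_one t).2 hcos))⟩
  refine ⟨0, c, ⟨b * t, b * s⟩, ?_, ?_, ?_⟩ <;>
    rw [Complex.dist_eq, ← sq_eq_sq₀ (norm_nonneg _) (by positivity), Complex.sq_norm,
      Complex.normSq_apply] <;>
    simp
  · linear_combination b ^ 2 * hs - ht
  · linear_combination b ^ 2 * hs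
  · ring

theorem arccos_add_arccos_add_arccos_eq_pi {a b c : ℝ} (ha : 0 < a) (hb : 0 < b) (hc : 0 < c)
    (hcos : |(b ^ 2 + c ^ 2 - a ^ 2) / (2 * b * c)| ≤ 1) :
    arccos ((b ^ 2 + c ^ 2 - a ^ 2) / (2 * b * c)) +
      arccos ((c ^ 2 + a ^ 2 - b ^ 2) / (2 * c * a)) +
      arccos ((a ^ 2 + b ^ 2 - c ^ 2) / (2 * a * b)) = π := by
  obtain ⟨p, q, r, rfl, rfl, rfl⟩ := Complex.exists_triangle_dist_eq ha.le hb hc hcos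
  have hqr : q ≠ r := dist_pos.1 ha
  have hrp : r ≠ p := dist_pos.1 hb
  have hpq : p ≠ q := dist_pos.1 hc
  have := angle_add_angle_add_angle_eq_pi r hpq.symm
  rw [angle_eq_arccos_dist hpq hqr.symm, angle_eq_arccos_dist hqr hrp.symm,
    angle_eq_arccos_dist hrp hpq.symm] at this
  simp only [dist_comm] at this ⊢
  linarith

theorem mul_mem_Ioc_neg_one_one {a b : ℝ} (ha : a ∈ Set.Ioc (-1) 1)
    (hb : b ∈ Set.Ioc (-1) 1) : a * b ∈ Set.Ioc (-1) 1 := by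
  obtain ⟨ha0, ha1⟩ := ha
  obtain ⟨hb0, hb1⟩ := hb
  constructor
  · rcases le_total 0 a with h | h <;> nlinarith
  · rcases le_total 0 a with h | h <;> nlinarith

theorem mul_le_mul_of_nonneg_or {u v a b : ℝ} (hu : u ≤ a) (hv : v ≤ b) (ha : 0 ≤ a)
    (hb : 0 ≤ b) (h : 0 ≤ u ∨ 0 ≤ v) : u * v ≤ a * b := by
  rcases h with h | h <;> rcases le_total 0 u <;> rcases le_total 0 v <;>
    nlinarith [mul_nonneg ha hb]

structure AdmissibleCosines (Ii Ij Ik : ℝ) : Prop where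
  mem_i : Ii ∈ Set.Ioc (-1) 1
  mem_j : Ij ∈ Set.Ioc (-1) 1
  mem_k : Ik ∈ Set.Ioc (-1) 1
  ξ_i : 0 ≤ Ii + Ij * Ik
  ξ_j : 0 ≤ Ij + Ik * Ii
  ξ_k : 0 ≤ Ik + Ii * Ij

namespace AdmissibleCosines

variable {Ii Ij Ik : ℝ}

theorem rotate (h : AdmissibleCosines Ii Ij Ik) : AdmissibleCosines Ij Ik Ii :=
  ⟨h.mem_j, h.mem_k, h.mem_i, h.ξ_j, h.ξ_k, h.ξ_i⟩

theorem swap (h : AdmissibleCosines Ii Ij Ik) : AdmissibleCosines Ii Ik Ij :=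
  ⟨h.mem_i, h.mem_k, h.mem_j, by linarith [h.ξ_i], by linarith [h.ξ_k], by linarith [h.ξ_j]⟩

theorem add_nonneg_of_nonpos (h : AdmissibleCosines Ii Ij Ik) (hI : Ii ≤ 0) : 0 ≤ Ij + Ii := by
  obtain ⟨⟨hi, -⟩, ⟨-, hj1⟩, ⟨-, hk1⟩, hξi, hξj, hξk⟩ := h
  have hIj : 0 ≤ Ij := by
    nlinarith [mul_nonneg (neg_nonneg.2 hI) hξk,
      mul_pos (neg_lt_iff_pos_add.1 hi) (by linarith : 0 < 1 - Ii)]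
  nlinarith

theorem nonneg_or_nonneg_of_pos (h : AdmissibleCosines Ii Ij Ik) (hI : 0 < Ii) :
    0 ≤ Ij ∨ 0 ≤ Ik := by
  by_contra! hneg
  nlinarith [h.ξ_j]

end AdmissibleCosines

section eucLen

variable {I a b : ℝ}

theorem eucLen_comm (I a b : ℝ) : eucLen I a b = eucLen I b a := by
  unfold eucLen; ring_nf

theorem sq_eucLen (hI : -1 ≤ I) (ha : 0 ≤ a) (hb : 0 ≤ b) :
    eucLen I a b ^ 2 = a ^ 2 + b ^ 2 + 2 * I * a * b :=
  sq_sqrt (by nlinarith [sq_nonneg (a - b), mul_nonneg ha hb])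

theorem eucLen_pos (hI : -1 < I) (ha : 0 < a) (hb : 0 < b) : 0 < eucLen I a b :=
  sqrt_pos.2 (by nlinarith [sq_nonneg (a - b), mul_pos ha hb])

theorem add_mul_le_eucLen (hI : I ∈ Set.Icc (-1) 1) (a b : ℝ) : a + I * b ≤ eucLen I a b :=
  (le_abs_self _).trans <| abs_le_sqrt <| by
    nlinarith [mul_nonneg (sq_nonneg b)
      (mul_nonneg (sub_nonneg.2 hI.2) (neg_le_iff_add_nonneg.1 hI.1))]

theorem eucLen_le_add (hI : I ≤ 1) (ha : 0 ≤ a) (hb : 0 ≤ b) : eucLen I a b ≤ a + b :=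
  sqrt_le_iff.2 ⟨by positivity, by nlinarith [mul_nonneg ha hb]⟩

end eucLen

section ThreeCircles

variable {Ii Ij Ik ri rj rk : ℝ}

/-- `cos ϑ_i`: the law-of-cosines ratio whose `arccos` is `eucAngle`. -/
noncomputable def eucCos (Ii Ij Ik ri rj rk : ℝ) : ℝ :=
  (eucLen Ij rk ri ^ 2 + eucLen Ik ri rj ^ 2 - eucLen Ii rj rk ^ 2) /
    (2 * eucLen Ij rk ri * eucLen Ik ri rj)

theorem eucCos_eq (h : AdmissibleCosines Ii Ij Ik) (hri : 0 < ri) (hrj : 0 < rj) (hrk : 0 < rk) :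
    eucCos Ii Ij Ik ri rj rk = (ri ^ 2 + Ij * rk * ri + Ik * ri * rj - Ii * rj * rk) /
      (eucLen Ij rk ri * eucLen Ik ri rj) := by
  rw [eucCos, sq_eucLen h.mem_i.1.le hrj.le hrk.le, sq_eucLen h.mem_j.1.le hrk.le hri.le,
    sq_eucLen h.mem_k.1.le hri.le hrj.le, mul_assoc, ← div_div]
  ring

/-- The left side is `(l_j l_k sin ϑ_i)²`, four times the squared area of the triangle. -/
theorem heron_radii (Ii Ij Ik ri rj rk : ℝ) :
    (rk ^ 2 + ri ^ 2 + 2 * Ij * rk * ri) * (ri ^ 2 + rj ^ 2 + 2 * Ik * ri * rj) -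
      (ri ^ 2 + Ij * rk * ri + Ik * ri * rj - Ii * rj * rk) ^ 2 =
      ri ^ 2 * rj ^ 2 * (1 - Ik ^ 2) + rj ^ 2 * rk ^ 2 * (1 - Ii ^ 2) +
        rk ^ 2 * ri ^ 2 * (1 - Ij ^ 2) + 2 * ri ^ 2 * rj * rk * (Ii + Ij * Ik) +
        2 * rj ^ 2 * rk * ri * (Ij + Ik * Ii) + 2 * rk ^ 2 * ri * rj * (Ik + Ii * Ij) := by
  ring

theorem AdmissibleCosines.abs_eucCos_lt_one (h : AdmissibleCosines Ii Ij Ik) (hri : 0 < ri)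
    (hrj : 0 < rj) (hrk : 0 < rk) : |eucCos Ii Ij Ik ri rj rk| < 1 := by
  have hlj := eucLen_pos h.mem_j.1 hrk hri
  have hlk := eucLen_pos h.mem_k.1 hri hrj
  rw [eucCos_eq h hri hrj hrk, abs_div, abs_of_pos (mul_pos hlj hlk), div_lt_one (by positivity)]
  refine abs_lt_of_sq_lt_sq (sub_pos.1 ?_) (by positivity)
  rw [mul_pow, sq_eucLen h.mem_j.1.le hrk.le hri.le, sq_eucLen h.mem_k.1.le hri.le hrj.le,
    heron_radii]
  obtain ⟨⟨hi, hi1⟩, ⟨hj, hj1⟩, ⟨hk, hk1⟩, hξi, hξj, hξk⟩ := h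
  have hjk : 0 ≤ 1 - Ij ^ 2 := by nlinarith
  have hkk : 0 ≤ 1 - Ik ^ 2 := by nlinarith
  have : 0 < rj ^ 2 * rk ^ 2 * (1 - Ii ^ 2) + 2 * ri ^ 2 * rj * rk * (Ii + Ij * Ik) := by
    rcases hi1.lt_or_eq with hi1 | rfl
    · have : 0 < 1 - Ii ^ 2 := by nlinarith
      positivity
    · have : 0 < 1 + Ij * Ik := by nlinarith
      positivity
  have := mul_nonneg (by positivity : 0 ≤ ri ^ 2 * rj ^ 2) hkk
  have := mul_nonneg (by positivity : 0 ≤ rk ^ 2 * ri ^ 2) hjk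
  have := mul_nonneg (by positivity : 0 ≤ 2 * rj ^ 2 * rk * ri) hξj
  have := mul_nonneg (by positivity : 0 ≤ 2 * rk ^ 2 * ri * rj) hξk
  linarith

theorem AdmissibleCosines.add_mul_eucLen_mul_pos (h : AdmissibleCosines Ii Ij Ik) (hri : 0 < ri)
    (hrj : 0 < rj) (hrk : 0 < rk) :
    0 < ri ^ 2 + Ij * rk * ri + Ik * ri * rj - Ii * rj * rk +
      Ii * (eucLen Ij rk ri * eucLen Ik ri rj) := by
  rcases le_or_gt Ii 0 with hI | hI
  · have hlen : eucLen Ij rk ri * eucLen Ik ri rj ≤ (rk + ri) * (ri + rj) :=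
      mul_le_mul (eucLen_le_add h.mem_j.2 hrk.le hri.le) (eucLen_le_add h.mem_k.2 hri.le hrj.le)
        (eucLen_pos h.mem_k.1 hri hrj).le (by positivity)
    have hj := h.add_nonneg_of_nonpos hI
    have hk := h.swap.add_nonneg_of_nonpos hI
    have hi : 0 < 1 + Ii := by linarith [h.mem_i.1]
    calc 0 < ri ^ 2 * (1 + Ii) + rk * ri * (Ij + Ii) + ri * rj * (Ik + Ii) := by positivity
      _ = ri ^ 2 + Ij * rk * ri + Ik * ri * rj - Ii * rj * rk + Ii * ((rk + ri) * (ri + rj)) := by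
        ring
      _ ≤ _ := by linarith [mul_le_mul_of_nonpos_left hlen hI]
  · have hlen : (rk + Ij * ri) * (rj + Ik * ri) ≤ eucLen Ij rk ri * eucLen Ik ri rj := by
      refine mul_le_mul_of_nonneg_or (add_mul_le_eucLen (Set.Ioc_subset_Icc_self h.mem_j) rk ri) ?_
        (eucLen_pos h.mem_j.1 hrk hri).le (eucLen_pos h.mem_k.1 hri hrj).le
        ((h.nonneg_or_nonneg_of_pos hI).imp (fun _ ↦ by positivity) (fun _ ↦ by positivity))
      rw [eucLen_comm]
      exact add_mul_le_eucLen (Set.Ioc_subset_Icc_self h.mem_k) rj ri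
    have hi : 0 < 1 + Ii * Ij * Ik := by
      linarith [(mul_mem_Ioc_neg_one_one (mul_mem_Ioc_neg_one_one h.mem_i h.mem_j) h.mem_k).1]
    have := h.ξ_j
    have := h.ξ_k
    calc 0 < ri ^ 2 * (1 + Ii * Ij * Ik) + rk * ri * (Ij + Ik * Ii) + ri * rj * (Ik + Ii * Ij) := by
          positivity
      _ = ri ^ 2 + Ij * rk * ri + Ik * ri * rj - Ii * rj * rk +
          Ii * ((rk + Ij * ri) * (rj + Ik * ri)) := by ring
      _ ≤ _ := by gcongr

theorem AdmissibleCosines.neg_lt_eucCos (h : AdmissibleCosines Ii Ij Ik) (hri : 0 < ri)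
    (hrj : 0 < rj) (hrk : 0 < rk) : -Ii < eucCos Ii Ij Ik ri rj rk := by
  rw [eucCos_eq h hri hrj hrk,
    lt_div_iff₀ (mul_pos (eucLen_pos h.mem_j.1 hrk hri) (eucLen_pos h.mem_k.1 hri hrj))]
  linarith [h.add_mul_eucLen_mul_pos hri hrj hrk]

theorem AdmissibleCosines.eucAngle_pos (h : AdmissibleCosines Ii Ij Ik) (hri : 0 < ri)
    (hrj : 0 < rj) (hrk : 0 < rk) : 0 < eucAngle Ii Ij Ik ri rj rk :=
  arccos_pos.2 (abs_lt.1 (h.abs_eucCos_lt_one hri hrj hrk)).2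

theorem AdmissibleCosines.eucAngle_lt_pi_sub {Θ : ℝ} (h : AdmissibleCosines (cos Θ) Ij Ik)
    (hΘ₀ : 0 ≤ Θ) (hΘ : Θ ≤ π) (hri : 0 < ri) (hrj : 0 < rj) (hrk : 0 < rk) :
    eucAngle (cos Θ) Ij Ik ri rj rk < π - Θ :=
  calc eucAngle (cos Θ) Ij Ik ri rj rk < arccos (-cos Θ) :=
        arccos_lt_arccos (neg_le_neg (cos_le_one Θ)) (h.neg_lt_eucCos hri hrj hrk)
          (abs_lt.1 (h.abs_eucCos_lt_one hri hrj hrk)).2.le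
    _ = π - Θ := by rw [arccos_neg, arccos_cos hΘ₀ hΘ]

theorem AdmissibleCosines.eucAngle_add_eucAngle_add_eucAngle (h : AdmissibleCosines Ii Ij Ik)
    (hri : 0 < ri) (hrj : 0 < rj) (hrk : 0 < rk) :
    eucAngle Ii Ij Ik ri rj rk + eucAngle Ij Ik Ii rj rk ri + eucAngle Ik Ii Ij rk ri rj = π :=
  arccos_add_arccos_add_arccos_eq_pi (eucLen_pos h.mem_i.1 hrj hrk) (eucLen_pos h.mem_j.1 hrk hri)
    (eucLen_pos h.mem_k.1 hri hrj) (h.abs_eucCos_lt_one hri hrj hrk).le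

end ThreeCircles

theorem stmt_9 (Θi Θj Θk : ℝ)
    (hi0 : 0 ≤ Θi) (hi1 : Θi < Real.pi)
    (hj0 : 0 ≤ Θj) (hj1 : Θj < Real.pi)
    (hk0 : 0 ≤ Θk) (hk1 : Θk < Real.pi)
    (hξi : 0 ≤ Real.cos Θi + Real.cos Θj * Real.cos Θk)
    (hξj : 0 ≤ Real.cos Θj + Real.cos Θk * Real.cos Θi)
    (hξk : 0 ≤ Real.cos Θk + Real.cos Θi * Real.cos Θj)
    (ri rj rk : ℝ) (hri : 0 < ri) (hrj : 0 < rj) (hrk : 0 < rk) :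
    (0 < eucAngle (Real.cos Θi) (Real.cos Θj) (Real.cos Θk) ri rj rk ∧
      eucAngle (Real.cos Θi) (Real.cos Θj) (Real.cos Θk) ri rj rk < Real.pi - Θi) ∧
    (0 < eucAngle (Real.cos Θj) (Real.cos Θk) (Real.cos Θi) rj rk ri ∧
      eucAngle (Real.cos Θj) (Real.cos Θk) (Real.cos Θi) rj rk ri < Real.pi - Θj) ∧
    (0 < eucAngle (Real.cos Θk) (Real.cos Θi) (Real.cos Θj) rk ri rj ∧
      eucAngle (Real.cos Θk) (Real.cos Θi) (Real.cos Θj) rk ri rj < Real.pi - Θk) ∧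
    eucAngle (Real.cos Θi) (Real.cos Θj) (Real.cos Θk) ri rj rk
      + eucAngle (Real.cos Θj) (Real.cos Θk) (Real.cos Θi) rj rk ri
      + eucAngle (Real.cos Θk) (Real.cos Θi) (Real.cos Θj) rk ri rj = Real.pi := by
  have hcos {Θ : ℝ} (h₀ : 0 ≤ Θ) (h₁ : Θ < π) : cos Θ ∈ Set.Ioc (-1) 1 :=
    ⟨by simpa using cos_lt_cos_of_nonneg_of_le_pi h₀ le_rfl h₁, cos_le_one _⟩
  have h : AdmissibleCosines (cos Θi) (cos Θj) (cos Θk) :=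
    ⟨hcos hi0 hi1, hcos hj0 hj1, hcos hk0 hk1, hξi, hξj, hξk⟩
  exact ⟨⟨h.eucAngle_pos hri hrj hrk, h.eucAngle_lt_pi_sub hi0 hi1.le hri hrj hrk⟩,
    ⟨h.rotate.eucAngle_pos hrj hrk hri, h.rotate.eucAngle_lt_pi_sub hj0 hj1.le hrj hrk hri⟩,
    ⟨h.rotate.rotate.eucAngle_pos hrk hri hrj,
      h.rotate.rotate.eucAngle_lt_pi_sub hk0 hk1.le hrk hri hrj⟩,
    h.eucAngle_add_eucAngle_add_eucAngle hri hrj hrk⟩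
end

section
/- Assume ξ_i ≥ 0, ξ_j ≥ 0, ξ_k ≥ 0, and let a, b be positive reals. Then the Euclidean inner angle ϑ_i(r_i, r_j, r_k) tends to π − Θ_i as (r_i, r_j, r_k) tends to (0, a, b) within the open positive octant (0,∞)³. -/
lemma eucLen_zero_left (I r : ℝ) : eucLen I 0 r = |r| := by
  simp [eucLen, Real.sqrt_sq_eq_abs]

lemma eucLen_zero_right (I r : ℝ) : eucLen I r 0 = |r| := by
  simp [eucLen, Real.sqrt_sq_eq_abs]

lemma eucLen_sq {I rj rk : ℝ} (hI : -1 ≤ I) (hrj : 0 ≤ rj) (hrk : 0 ≤ rk) :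
    eucLen I rj rk ^ 2 = rj ^ 2 + rk ^ 2 + 2 * I * rj * rk := by
  refine Real.sq_sqrt ?_
  nlinarith [sq_nonneg (rj - rk), mul_nonneg hrj hrk]

lemma continuousAt_eucAngle (Ii Ij Ik : ℝ) {p : ℝ × ℝ × ℝ}
    (hj : eucLen Ij p.2.2 p.1 ≠ 0) (hk : eucLen Ik p.1 p.2.1 ≠ 0) :
    ContinuousAt (fun q : ℝ × ℝ × ℝ => eucAngle Ii Ij Ik q.1 q.2.1 q.2.2) p := by
  unfold eucAngle
  refine Real.continuous_arccos.continuousAt.comp (ContinuousAt.div ?_ ?_ (by simp [hj, hk]))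
  all_goals unfold eucLen; fun_prop

lemma eucAngle_zero_left {Ii : ℝ} (Ij Ik : ℝ) {a b : ℝ} (hI : -1 ≤ Ii) (ha : 0 < a) (hb : 0 < b) :
    eucAngle Ii Ij Ik 0 a b = Real.arccos (-Ii) := by
  rw [eucAngle, eucLen_zero_left, eucLen_zero_right, eucLen_sq hI ha.le hb.le,
    abs_of_pos ha, abs_of_pos hb]
  congr 1
  field_simp
  ring

theorem stmt_11_general (Θi Θj Θk : ℝ)
    (hi0 : 0 ≤ Θi) (hi1 : Θi < Real.pi)
    (a b : ℝ) (ha : 0 < a) (hb : 0 < b) :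
    Filter.Tendsto
      (fun p : ℝ × ℝ × ℝ =>
        eucAngle (Real.cos Θi) (Real.cos Θj) (Real.cos Θk) p.1 p.2.1 p.2.2)
      (nhdsWithin (0, a, b) (Set.Ioi 0 ×ˢ Set.Ioi 0 ×ˢ Set.Ioi 0))
      (nhds (Real.pi - Θi)) := by
  have hcont := continuousAt_eucAngle (Real.cos Θi) (Real.cos Θj) (Real.cos Θk)
    (p := (0, a, b)) (by simp [eucLen_zero_right, hb.ne']) (by simp [eucLen_zero_left, ha.ne'])
  have hval : eucAngle (Real.cos Θi) (Real.cos Θj) (Real.cos Θk) 0 a b = Real.pi - Θi := by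
    rw [eucAngle_zero_left _ _ (Real.neg_one_le_cos Θi) ha hb, Real.arccos_neg,
      Real.arccos_cos hi0 hi1.le]
  exact hval ▸ hcont.continuousWithinAt.tendsto

theorem stmt_11 (Θi Θj Θk : ℝ)
    (hi0 : 0 ≤ Θi) (hi1 : Θi < Real.pi)
    (hj0 : 0 ≤ Θj) (hj1 : Θj < Real.pi)
    (hk0 : 0 ≤ Θk) (hk1 : Θk < Real.pi)
    (hξi : 0 ≤ Real.cos Θi + Real.cos Θj * Real.cos Θk)
    (hξj : 0 ≤ Real.cos Θj + Real.cos Θk * Real.cos Θi)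
    (hξk : 0 ≤ Real.cos Θk + Real.cos Θi * Real.cos Θj)
    (a b : ℝ) (ha : 0 < a) (hb : 0 < b) :
    Filter.Tendsto
      (fun p : ℝ × ℝ × ℝ =>
        eucAngle (Real.cos Θi) (Real.cos Θj) (Real.cos Θk) p.1 p.2.1 p.2.2)
      (nhdsWithin (0, a, b) (Set.Ioi 0 ×ˢ Set.Ioi 0 ×ˢ Set.Ioi 0))
      (nhds (Real.pi - Θi)) :=
  stmt_11_general Θi Θj Θk hi0 hi1 a b ha hb
end

section
/- Assume ξ_i ≥ 0, ξ_j ≥ 0, ξ_k ≥ 0. For every ε > 0 there exists L > 0 such that for all positive reals r_i, r_j, r_k with r_i > L, the hyperbolic inner angle satisfies ϑ_i(r_i, r_j, r_k) < ε. In particular, for any fixed r_j, r_k > 0, ϑ_i(r_i, r_j, r_k) tends to 0 as r_i tends to +∞. -/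
/-- `hypCosh I rj rk` is the hyperbolic cosine of the side length `l_i` of
the hyperbolic three-circle configuration:
`cosh l_i = cosh r_j · cosh r_k + I_i · sinh r_j · sinh r_k`. -/
noncomputable def hypCosh (I rj rk : ℝ) : ℝ :=
  Real.cosh rj * Real.cosh rk + I * Real.sinh rj * Real.sinh rk

/-- The hyperbolic inner angle `ϑ_i` at the center of the circle of radius `r_i`
in the hyperbolic three-circle configuration with radii `r_i, r_j, r_k` and
cosines of exterior intersection angles `I_i, I_j, I_k`:
`ϑ_i = arccos((cosh l_j · cosh l_k − cosh l_i)/(sinh l_j · sinh l_k))`,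
where `sinh l = √(cosh² l − 1)` since `l > 0`.  The angles `ϑ_j, ϑ_k` are
obtained by cyclic permutation of the arguments. -/
noncomputable def hypAngle (Ii Ij Ik ri rj rk : ℝ) : ℝ :=
  Real.arccos ((hypCosh Ij rk ri * hypCosh Ik ri rj - hypCosh Ii rj rk) /
    (Real.sqrt (hypCosh Ij rk ri ^ 2 - 1) * Real.sqrt (hypCosh Ik ri rj ^ 2 - 1)))

/-!
Write `S_j = cosh r_k sinh r_i + I_j sinh r_k cosh r_i` (the `r_i`-derivative of `cosh l_j`).
Then `cosh² l_j - 1 = S_j² + (1 - I_j²) sinh² r_k` and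
`cosh l_j cosh l_k - cosh l_i = S_j S_k - ξ_i sinh r_j sinh r_k`.
Since `I_j, I_k > -1`, we have `S_j ≥ (sinh r_i + a cosh r_i) cosh r_k` for some `a > -1`, so
`cosh r_k ≤ η S_j` with `η → 0` as `r_i → ∞`, uniformly in `r_j, r_k`. Every correction term is
then `O(η²)` relative to `S_j S_k`, which gives `cos ϑ_i ≥ 1 - 3η²`.
-/

open Real Filter Set

/-- Equals `sinh (ρ + r)` when `I = 1`, just as `hypCosh 1 ρ r = cosh (ρ + r)`. -/
noncomputable def hypSinh (I ρ r : ℝ) : ℝ :=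
  cosh ρ * sinh r + I * sinh ρ * cosh r

lemma hypCosh_comm (I x y : ℝ) : hypCosh I x y = hypCosh I y x := by
  unfold hypCosh; ring

lemma hypCosh_sq_sub_one (I ρ r : ℝ) :
    hypCosh I ρ r ^ 2 - 1 = hypSinh I ρ r ^ 2 + (1 - I ^ 2) * sinh ρ ^ 2 := by
  unfold hypCosh hypSinh
  linear_combination (cosh ρ ^ 2 - I ^ 2 * sinh ρ ^ 2) * cosh_sq r + cosh_sq ρ

lemma hypCosh_mul_hypCosh_sub_hypCosh (Ii Ij Ik ri rj rk : ℝ) :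
    hypCosh Ij rk ri * hypCosh Ik rj ri - hypCosh Ii rj rk =
      hypSinh Ij rk ri * hypSinh Ik rj ri - (Ii + Ij * Ik) * (sinh rj * sinh rk) := by
  unfold hypCosh hypSinh
  linear_combination (cosh rj * cosh rk - Ij * Ik * sinh rj * sinh rk) * cosh_sq ri

lemma hypSinh_sq_le {I : ℝ} (hI : |I| ≤ 1) (ρ r : ℝ) :
    hypSinh I ρ r ^ 2 ≤ hypCosh I ρ r ^ 2 - 1 := by
  have : I ^ 2 ≤ 1 := by nlinarith [abs_nonneg I, sq_abs I]
  rw [hypCosh_sq_sub_one]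
  nlinarith [sq_nonneg (sinh ρ)]

lemma hypCosh_sq_sub_one_le {I ρ r η : ℝ} (h : cosh ρ ≤ η * hypSinh I ρ r) :
    hypCosh I ρ r ^ 2 - 1 ≤ hypSinh I ρ r ^ 2 * (1 + η ^ 2) := by
  have hcosh : cosh ρ ^ 2 ≤ (η * hypSinh I ρ r) ^ 2 :=
    pow_le_pow_left₀ (cosh_pos ρ).le h 2
  rw [hypCosh_sq_sub_one]
  nlinarith [cosh_sq ρ, sq_nonneg I, sq_nonneg (sinh ρ)]

lemma mul_cosh_le_hypSinh {a I ρ : ℝ} (haI : a ≤ I) (ha : a ≤ 0) (hρ : 0 ≤ ρ) (r : ℝ) :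
    (sinh r + a * cosh r) * cosh ρ ≤ hypSinh I ρ r := by
  have hsinh : 0 ≤ sinh ρ := sinh_nonneg_iff.mpr hρ
  have : a * cosh ρ ≤ I * sinh ρ := calc
    a * cosh ρ ≤ a * sinh ρ := mul_le_mul_of_nonpos_left (sinh_lt_cosh ρ).le ha
    _ ≤ I * sinh ρ := mul_le_mul_of_nonneg_right haI hsinh
  unfold hypSinh
  nlinarith [cosh_pos r]

lemma tendsto_sinh_add_mul_cosh_atTop {a : ℝ} (ha : -1 < a) :
    Tendsto (fun r => sinh r + a * cosh r) atTop atTop := by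
  have hexp : Tendsto (fun r => (1 + a) / 2 * exp r) atTop atTop :=
    tendsto_exp_atTop.const_mul_atTop (by linarith)
  have hexp_neg : Tendsto (fun r => -((1 - a) / 2) * exp (-r)) atTop (nhds 0) := by
    simpa using tendsto_exp_neg_atTop_nhds_zero.const_mul (-((1 - a) / 2))
  refine (hexp.atTop_add hexp_neg).congr fun r => ?_
  rw [sinh_eq, cosh_eq]
  ring

lemma one_sub_three_mul_sq_le_div {A B P Q N η : ℝ} (hA : 0 < A) (hB : 0 < B)
    (hAP : A ^ 2 ≤ P) (hPA : P ≤ A ^ 2 * (1 + η ^ 2))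
    (hBQ : B ^ 2 ≤ Q) (hQB : Q ≤ B ^ 2 * (1 + η ^ 2))
    (hN : A * B * (1 - 2 * η ^ 2) ≤ N) (hη : 2 * η ^ 2 ≤ 1) :
    1 - 3 * η ^ 2 ≤ N / (√P * √Q) := by
  have hAB : 0 < A * B := mul_pos hA hB
  have hD : 0 < √P * √Q :=
    mul_pos (sqrt_pos.mpr ((sq_pos_of_pos hA).trans_le hAP))
      (sqrt_pos.mpr ((sq_pos_of_pos hB).trans_le hBQ))
  have hDle : √P * √Q ≤ A * B * (1 + η ^ 2) := by
    rw [← sqrt_mul ((sq_nonneg A).trans hAP), ← sqrt_sq (by positivity : 0 ≤ A * B * (1 + η ^ 2))]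
    apply sqrt_le_sqrt
    calc P * Q ≤ A ^ 2 * (1 + η ^ 2) * (B ^ 2 * (1 + η ^ 2)) :=
          mul_le_mul hPA hQB ((sq_nonneg B).trans hBQ) (by positivity)
      _ = (A * B * (1 + η ^ 2)) ^ 2 := by ring
  calc 1 - 3 * η ^ 2 ≤ (1 - 2 * η ^ 2) / (1 + η ^ 2) := by
        rw [le_div_iff₀ (by positivity)]; nlinarith [sq_nonneg (η ^ 2)]
    _ = A * B * (1 - 2 * η ^ 2) / (A * B * (1 + η ^ 2)) := (mul_div_mul_left _ _ hAB.ne').symm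
    _ ≤ N / (A * B * (1 + η ^ 2)) := div_le_div_of_nonneg_right hN (by positivity)
    _ ≤ N / (√P * √Q) := div_le_div_of_nonneg_left (hN.trans' (by nlinarith)) hD hDle

noncomputable def hypCosAngle (Ii Ij Ik ri rj rk : ℝ) : ℝ :=
  (hypCosh Ij rk ri * hypCosh Ik ri rj - hypCosh Ii rj rk) /
    (√(hypCosh Ij rk ri ^ 2 - 1) * √(hypCosh Ik ri rj ^ 2 - 1))

lemma hypAngle_eq_arccos (Ii Ij Ik ri rj rk : ℝ) :
    hypAngle Ii Ij Ik ri rj rk = arccos (hypCosAngle Ii Ij Ik ri rj rk) := rfl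

lemma hypAngle_nonneg (Ii Ij Ik ri rj rk : ℝ) : 0 ≤ hypAngle Ii Ij Ik ri rj rk :=
  arccos_nonneg _

section

variable {Ii Ij Ik : ℝ}

lemma one_sub_three_mul_sq_le_hypCosAngle {ri rj rk η : ℝ}
    (hIi : |Ii| ≤ 1) (hIj : |Ij| ≤ 1) (hIk : |Ik| ≤ 1) (hrj : 0 ≤ rj) (hrk : 0 ≤ rk)
    (hη0 : 0 ≤ η) (hη : 2 * η ^ 2 ≤ 1)
    (hj : cosh rj ≤ η * hypSinh Ik rj ri) (hk : cosh rk ≤ η * hypSinh Ij rk ri) :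
    1 - 3 * η ^ 2 ≤ hypCosAngle Ii Ij Ik ri rj rk := by
  have hA : 0 < hypSinh Ij rk ri := pos_of_mul_pos_right ((cosh_pos rk).trans_le hk) hη0
  have hB : 0 < hypSinh Ik rj ri := pos_of_mul_pos_right ((cosh_pos rj).trans_le hj) hη0
  have hξ : Ii + Ij * Ik ≤ 2 := by
    have := abs_le.1 hIi
    have := (le_abs_self (Ij * Ik)).trans (abs_mul Ij Ik ▸ mul_le_one₀ hIj (abs_nonneg _) hIk)
    linarith
  have hsinh : 0 ≤ sinh rj * sinh rk :=
    mul_nonneg (sinh_nonneg_iff.2 hrj) (sinh_nonneg_iff.2 hrk)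
  have hsinh_cosh : sinh rj * sinh rk ≤ cosh rj * cosh rk :=
    mul_le_mul (sinh_lt_cosh rj).le (sinh_lt_cosh rk).le (sinh_nonneg_iff.2 hrk)
      (cosh_pos rj).le
  have hcosh : cosh rj * cosh rk ≤ η ^ 2 * (hypSinh Ij rk ri * hypSinh Ik rj ri) := calc
    cosh rj * cosh rk ≤ (η * hypSinh Ik rj ri) * (η * hypSinh Ij rk ri) :=
      mul_le_mul hj hk (cosh_pos rk).le (by positivity)
    _ = _ := by ring
  unfold hypCosAngle
  rw [hypCosh_comm Ik ri rj]
  refine one_sub_three_mul_sq_le_div hA hB (hypSinh_sq_le hIj _ _) (hypCosh_sq_sub_one_le hk)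
    (hypSinh_sq_le hIk _ _) (hypCosh_sq_sub_one_le hj) ?_ hη
  rw [hypCosh_mul_hypCosh_sub_hypCosh]
  nlinarith

lemma eventually_one_sub_lt_hypCosAngle (hIi : |Ii| ≤ 1) (hIj : Ij ∈ Ioc (-1) 1)
    (hIk : Ik ∈ Ioc (-1) 1) {δ : ℝ} (hδ : 0 < δ) :
    ∀ᶠ ri in atTop, ∀ rj rk, 0 ≤ rj → 0 ≤ rk → 1 - δ < hypCosAngle Ii Ij Ik ri rj rk := by
  set η := min (δ / 3) (1 / 2)
  have hη0 : 0 < η := lt_min (by positivity) one_half_pos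
  have hηδ : 3 * η ^ 2 < δ := by
    nlinarith [min_le_left (δ / 3) (1 / 2), min_le_right (δ / 3) (1 / 2)]
  have hη : 2 * η ^ 2 ≤ 1 := by nlinarith [min_le_right (δ / 3) (1 / 2)]
  set a := min (min Ij Ik) 0
  have ha : -1 < a := lt_min (lt_min hIj.1 hIk.1) neg_one_lt_zero
  filter_upwards [(tendsto_sinh_add_mul_cosh_atTop ha).eventually_ge_atTop η⁻¹] with ri hri
  have hcosh_le {I ρ : ℝ} (haI : a ≤ I) (hρ : 0 ≤ ρ) : cosh ρ ≤ η * hypSinh I ρ ri := calc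
    cosh ρ = η * (η⁻¹ * cosh ρ) := by field_simp
    _ ≤ η * ((sinh ri + a * cosh ri) * cosh ρ) := by gcongr
    _ ≤ η * hypSinh I ρ ri := by gcongr; exact mul_cosh_le_hypSinh haI (min_le_right _ _) hρ ri
  intro rj rk hrj hrk
  refine (sub_lt_sub_left hηδ 1).trans_le (one_sub_three_mul_sq_le_hypCosAngle hIi
    (abs_le.2 ⟨hIj.1.le, hIj.2⟩) (abs_le.2 ⟨hIk.1.le, hIk.2⟩) hrj hrk hη0.le hη ?_ ?_)
  · exact hcosh_le ((min_le_left _ _).trans (min_le_right _ _)) hrj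
  · exact hcosh_le ((min_le_left _ _).trans (min_le_left _ _)) hrk

lemma exists_forall_arccos_lt {ε : ℝ} (hε : 0 < ε) : ∃ δ > 0, ∀ x, 1 - δ < x → arccos x < ε := by
  set e := min ε π
  have he : 0 < e := lt_min hε pi_pos
  have heπ : e ≤ π := min_le_right _ _
  have hcos : cos e < 1 := by simpa using cos_lt_cos_of_nonneg_of_le_pi le_rfl heπ he
  refine ⟨1 - cos e, sub_pos.2 hcos, fun x hx => ?_⟩
  rcases le_or_gt 1 x with h1 | h1
  · rwa [arccos_eq_zero.2 h1]
  · calc arccos x < arccos (cos e) := arccos_lt_arccos (neg_one_le_cos e) (by linarith) h1.le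
      _ = e := arccos_cos he.le heπ
      _ ≤ ε := min_le_left _ _

lemma tendstoUniformlyOn_hypAngle_atTop (hIi : |Ii| ≤ 1) (hIj : Ij ∈ Ioc (-1) 1)
    (hIk : Ik ∈ Ioc (-1) 1) :
    TendstoUniformlyOn (fun ri (r : ℝ × ℝ) => hypAngle Ii Ij Ik ri r.1 r.2) 0 atTop
      (Ici 0 ×ˢ Ici 0) := by
  rw [Metric.tendstoUniformlyOn_iff]
  intro ε hε
  obtain ⟨δ, hδ, hδε⟩ := exists_forall_arccos_lt hε
  filter_upwards [eventually_one_sub_lt_hypCosAngle hIi hIj hIk hδ] with ri hri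
  rintro ⟨rj, rk⟩ ⟨hrj, hrk⟩
  rw [Pi.zero_apply, dist_zero_left, norm_of_nonneg (hypAngle_nonneg ..), hypAngle_eq_arccos]
  exact hδε _ (hri rj rk hrj hrk)

end

lemma neg_one_lt_cos {θ : ℝ} (h0 : 0 ≤ θ) (hπ : θ < π) : -1 < cos θ := by
  simpa using cos_lt_cos_of_nonneg_of_le_pi h0 le_rfl hπ

theorem stmt_16_general (Θi Θj Θk : ℝ)
    (hj0 : 0 ≤ Θj) (hj1 : Θj < Real.pi)
    (hk0 : 0 ≤ Θk) (hk1 : Θk < Real.pi) :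
    (∀ ε > (0 : ℝ), ∃ L > (0 : ℝ), ∀ ri rj rk : ℝ, 0 < ri → 0 < rj → 0 < rk → L < ri →
      hypAngle (Real.cos Θi) (Real.cos Θj) (Real.cos Θk) ri rj rk < ε) ∧
    ∀ rj rk : ℝ, 0 < rj → 0 < rk →
      Filter.Tendsto (fun ri => hypAngle (Real.cos Θi) (Real.cos Θj) (Real.cos Θk) ri rj rk)
        Filter.atTop (nhds 0) := by
  have hunif := tendstoUniformlyOn_hypAngle_atTop (abs_cos_le_one Θi)
    ⟨neg_one_lt_cos hj0 hj1, cos_le_one Θj⟩ ⟨neg_one_lt_cos hk0 hk1, cos_le_one Θk⟩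
  refine ⟨fun ε hε => ?_, fun rj rk hrj hrk => ?_⟩
  · obtain ⟨L, hL⟩ := eventually_atTop.1 (Metric.tendstoUniformlyOn_iff.1 hunif ε hε)
    refine ⟨max L 1, lt_max_of_lt_right one_pos, fun ri rj rk _ hrj hrk hri => ?_⟩
    have h := hL ri ((le_max_left L 1).trans hri.le) (rj, rk) ⟨hrj.le, hrk.le⟩
    rwa [Pi.zero_apply, dist_zero_left, norm_of_nonneg (hypAngle_nonneg ..)] at h
  · exact hunif.tendsto_at (x := (rj, rk)) ⟨hrj.le, hrk.le⟩

theorem stmt_16 (Θi Θj Θk : ℝ)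
    (hi0 : 0 ≤ Θi) (hi1 : Θi < Real.pi)
    (hj0 : 0 ≤ Θj) (hj1 : Θj < Real.pi)
    (hk0 : 0 ≤ Θk) (hk1 : Θk < Real.pi)
    (hξi : 0 ≤ Real.cos Θi + Real.cos Θj * Real.cos Θk)
    (hξj : 0 ≤ Real.cos Θj + Real.cos Θk * Real.cos Θi)
    (hξk : 0 ≤ Real.cos Θk + Real.cos Θi * Real.cos Θj) :
    (∀ ε > (0 : ℝ), ∃ L > (0 : ℝ), ∀ ri rj rk : ℝ, 0 < ri → 0 < rj → 0 < rk → L < ri →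
      hypAngle (Real.cos Θi) (Real.cos Θj) (Real.cos Θk) ri rj rk < ε) ∧
    ∀ rj rk : ℝ, 0 < rj → 0 < rk →
      Filter.Tendsto (fun ri => hypAngle (Real.cos Θi) (Real.cos Θj) (Real.cos Θk) ri rj rk)
        Filter.atTop (nhds 0) :=
  stmt_16_general Θi Θj Θk hj0 hj1 hk0 hk1
end
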